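/- For all parameters α > 0, ζ > 0, δ > 0 and γ ∈ ℝ, the fourth cumulant of the symmetric K-distribution, defined as κ₄ = μ̃₄ - 3 μ̃₂² where μ̃₂ and μ̃₄ are the second and fourth central moments, equals κ₄ = [α(α+1)(α+2)(α+3)ζ(ζ+1)(ζ+2)(ζ+3) - 3 (α(α+1)ζ(ζ+1))²] / δ⁴. -/

import Mathlib

/-!
For even `k` the `k`-th moment of the reflected Gamma density at scale `β` is, by symmetry, twice a
Gamma integral, namely `β ^ k Γ(α + k) / Γ(α)`. Exchanging the two integrals (Fubini, all
integrands being nonnegative) and integrating `β ^ k` against the Gamma prior then gives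
`μ̃ₖ = Γ(α + k) Γ(ζ + k) / (Γ(α) Γ(ζ) δ ^ k) = (α)ₖ (ζ)ₖ / δ ^ k` with rising factorials `(·)ₖ`.
-/

open Real MeasureTheory

/-- Density of the symmetric K-distribution (SKD): the continuous mixture of a
reflected Gamma parental density over a Gamma prior. -/
noncomputable def skdDensity (α ζ δ γ : ℝ) (x : ℝ) : ℝ :=
  ∫ β in Set.Ioi (0 : ℝ),
    (|x - γ| ^ (α - 1) / (2 * β ^ α * Real.Gamma α)) * Real.exp (-|x - γ| / β) *
      ((δ ^ ζ * β ^ (ζ - 1) / Real.Gamma ζ) * Real.exp (-δ * β))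

open Set Finset

theorem Real.Gamma_add_natCast {s : ℝ} (hs : 0 < s) (n : ℕ) :
    Gamma (s + n) = (∏ i ∈ range n, (s + i)) * Gamma s := by
  induction n with
  | zero => simp
  | succ n ih =>
    rw [Nat.cast_succ, ← add_assoc, Gamma_add_one (by positivity), ih, prod_range_succ]
    ring

theorem integrable_comp_abs {f : ℝ → ℝ} (hf : IntegrableOn f (Ioi 0)) :
    Integrable (fun x ↦ f |x|) := by
  have h_pos : IntegrableOn (fun x ↦ f |x|) (Ioi 0) :=
    hf.congr_fun (fun x hx ↦ by rw [abs_of_pos hx]) measurableSet_Ioi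
  have h_neg : IntegrableOn (fun x ↦ f |x|) (Iic 0) := by
    have h_emb : MeasurableEmbedding fun x : ℝ ↦ -x := (Homeomorph.neg ℝ).measurableEmbedding
    rw [← Measure.map_neg_eq_self (volume : Measure ℝ), h_emb.integrableOn_map_iff]
    simp_rw [Function.comp_def, abs_neg, neg_preimage, neg_Iic, neg_zero]
    exact Iff.mpr integrableOn_Ici_iff_integrableOn_Ioi h_pos
  rw [← integrableOn_univ, ← Iic_union_Ioi (a := (0 : ℝ))]
  exact h_neg.union h_pos

theorem integrableOn_rpow_mul_exp_neg_mul_Ioi {a r : ℝ} (ha : 0 < a) (hr : 0 < r) :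
    IntegrableOn (fun t : ℝ ↦ t ^ (a - 1) * exp (-(r * t))) (Ioi 0) := by
  refine (integrableOn_rpow_mul_exp_neg_mul_rpow (s := a - 1) (p := 1) (by linarith) one_pos
    hr).congr_fun (fun t _ ↦ ?_) measurableSet_Ioi
  simp [neg_mul]

noncomputable def reflectedGammaPDF (α β t : ℝ) : ℝ :=
  |t| ^ (α - 1) / (2 * β ^ α * Gamma α) * exp (-|t| / β)

noncomputable def gammaPriorPDF (ζ δ β : ℝ) : ℝ :=
  δ ^ ζ * β ^ (ζ - 1) / Gamma ζ * exp (-δ * β)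

theorem skdDensity_eq_integral (α ζ δ γ x : ℝ) :
    skdDensity α ζ δ γ x =
      ∫ β in Ioi 0, reflectedGammaPDF α β (x - γ) * gammaPriorPDF ζ δ β := rfl

section ReflectedGamma

variable {α β : ℝ}

theorem reflectedGammaPDF_nonneg (hα : 0 ≤ α) (hβ : 0 ≤ β) (t : ℝ) :
    0 ≤ reflectedGammaPDF α β t := by
  unfold reflectedGammaPDF; positivity

theorem reflectedGammaPDF_abs (t : ℝ) : reflectedGammaPDF α β |t| = reflectedGammaPDF α β t := by
  simp [reflectedGammaPDF]

theorem pow_mul_reflectedGammaPDF_of_pos (k : ℕ) {u : ℝ} (hu : 0 < u) :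
    u ^ k * reflectedGammaPDF α β u =
      (2 * β ^ α * Gamma α)⁻¹ * (u ^ (α + k - 1) * exp (-(β⁻¹ * u))) := by
  rw [reflectedGammaPDF, abs_of_pos hu, add_sub_right_comm, rpow_add hu, rpow_natCast]
  ring_nf

theorem integrableOn_pow_mul_reflectedGammaPDF (hα : 0 < α) (hβ : 0 < β) (k : ℕ) :
    IntegrableOn (fun u ↦ u ^ k * reflectedGammaPDF α β u) (Ioi 0) :=
  IntegrableOn.congr_fun
    ((integrableOn_rpow_mul_exp_neg_mul_Ioi (by positivity) (inv_pos.mpr hβ)).const_mul _)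
    (fun u hu ↦ (pow_mul_reflectedGammaPDF_of_pos k (mem_Ioi.mp hu)).symm) measurableSet_Ioi

theorem pow_mul_reflectedGammaPDF_of_even {k : ℕ} (hk : Even k) :
    (fun t ↦ t ^ k * reflectedGammaPDF α β t) = fun t ↦ |t| ^ k * reflectedGammaPDF α β |t| := by
  simp only [hk.pow_abs, reflectedGammaPDF_abs]

theorem integrable_pow_mul_reflectedGammaPDF (hα : 0 < α) (hβ : 0 < β) {k : ℕ} (hk : Even k) :
    Integrable (fun t ↦ t ^ k * reflectedGammaPDF α β t) := by
  rw [pow_mul_reflectedGammaPDF_of_even hk]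
  exact integrable_comp_abs (integrableOn_pow_mul_reflectedGammaPDF hα hβ k)

theorem integral_pow_mul_reflectedGammaPDF (hα : 0 < α) (hβ : 0 < β) {k : ℕ} (hk : Even k) :
    ∫ t, t ^ k * reflectedGammaPDF α β t = β ^ k * Gamma (α + k) / Gamma α := by
  have hΓ := Gamma_pos_of_pos hα
  calc ∫ t, t ^ k * reflectedGammaPDF α β t
      = 2 * ∫ u in Ioi 0, u ^ k * reflectedGammaPDF α β u := by
        conv_lhs => rw [pow_mul_reflectedGammaPDF_of_even hk]
        exact integral_comp_abs (f := fun u ↦ u ^ k * reflectedGammaPDF α β u)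
    _ = 2 * ((2 * β ^ α * Gamma α)⁻¹ * ∫ u in Ioi 0, u ^ (α + k - 1) * exp (-(β⁻¹ * u))) := by
        congr 1
        rw [← integral_const_mul]
        exact setIntegral_congr_fun measurableSet_Ioi fun u hu ↦
          pow_mul_reflectedGammaPDF_of_pos k (mem_Ioi.mp hu)
    _ = β ^ k * Gamma (α + k) / Gamma α := by
        rw [integral_rpow_mul_exp_neg_mul_Ioi (by positivity) (inv_pos.mpr hβ), one_div, inv_inv,
          rpow_add hβ, rpow_natCast]
        field_simp

end ReflectedGamma

section GammaPrior

variable {ζ δ : ℝ}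

theorem gammaPriorPDF_nonneg (hζ : 0 ≤ ζ) (hδ : 0 ≤ δ) {β : ℝ} (hβ : 0 ≤ β) :
    0 ≤ gammaPriorPDF ζ δ β := by
  unfold gammaPriorPDF; positivity

theorem pow_mul_gammaPriorPDF_of_pos (k : ℕ) {β : ℝ} (hβ : 0 < β) :
    β ^ k * gammaPriorPDF ζ δ β = δ ^ ζ / Gamma ζ * (β ^ (ζ + k - 1) * exp (-(δ * β))) := by
  rw [gammaPriorPDF, add_sub_right_comm, rpow_add hβ, rpow_natCast]
  ring_nf

theorem integrableOn_pow_mul_gammaPriorPDF (hζ : 0 < ζ) (hδ : 0 < δ) (k : ℕ) :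
    IntegrableOn (fun β ↦ β ^ k * gammaPriorPDF ζ δ β) (Ioi 0) :=
  IntegrableOn.congr_fun ((integrableOn_rpow_mul_exp_neg_mul_Ioi (by positivity) hδ).const_mul _)
    (fun β hβ ↦ (pow_mul_gammaPriorPDF_of_pos k (mem_Ioi.mp hβ)).symm) measurableSet_Ioi

theorem integral_pow_mul_gammaPriorPDF (hζ : 0 < ζ) (hδ : 0 < δ) (k : ℕ) :
    ∫ β in Ioi 0, β ^ k * gammaPriorPDF ζ δ β = Gamma (ζ + k) / (Gamma ζ * δ ^ k) := by
  have hΓ := Gamma_pos_of_pos hζ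
  rw [setIntegral_congr_fun measurableSet_Ioi fun β hβ ↦
      pow_mul_gammaPriorPDF_of_pos k (mem_Ioi.mp hβ), integral_const_mul,
    integral_rpow_mul_exp_neg_mul_Ioi (by positivity) hδ, one_div,
    inv_rpow hδ.le, rpow_add hδ, rpow_natCast]
  field_simp

end GammaPrior

section Mixture

variable {α ζ δ : ℝ}

theorem integral_pow_mul_skdDensity_eq_setIntegral (hα : 0 < α) (hζ : 0 < ζ) (hδ : 0 < δ)
    (γ : ℝ) {k : ℕ} (hk : Even k) :
    ∫ x, (x - γ) ^ k * skdDensity α ζ δ γ x =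
      ∫ β in Ioi 0, Gamma (α + k) / Gamma α * (β ^ k * gammaPriorPDF ζ δ β) := by
  set H : ℝ → ℝ → ℝ := fun β x ↦
    (x - γ) ^ k * (reflectedGammaPDF α β (x - γ) * gammaPriorPDF ζ δ β) with hH
  have h_fiber : ∀ β ∈ Ioi (0 : ℝ), Integrable (H β) ∧
      ∫ x, H β x = Gamma (α + k) / Gamma α * (β ^ k * gammaPriorPDF ζ δ β) := by
    intro β hβ
    have h_eq : H β = fun x ↦ (x - γ) ^ k * reflectedGammaPDF α β (x - γ) * gammaPriorPDF ζ δ β :=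
      funext fun x ↦ by rw [hH, mul_assoc]
    rw [h_eq, integral_mul_const,
      integral_sub_right_eq_self (fun t ↦ t ^ k * reflectedGammaPDF α β t),
      integral_pow_mul_reflectedGammaPDF hα hβ hk]
    refine ⟨((integrable_pow_mul_reflectedGammaPDF hα hβ hk).comp_sub_right γ).mul_const _, ?_⟩
    ring
  have h_nonneg : ∀ β ∈ Ioi (0 : ℝ), ∀ x, 0 ≤ H β x := fun β hβ x ↦
    mul_nonneg (hk.pow_nonneg _) (mul_nonneg (reflectedGammaPDF_nonneg hα.le hβ.le _)
      (gammaPriorPDF_nonneg hζ.le hδ.le hβ.le))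
  have h_meas : Measurable (Function.uncurry H) := by
    simp only [hH, reflectedGammaPDF, gammaPriorPDF, Function.uncurry_def]
    fun_prop
  have h_int : Integrable (Function.uncurry H) ((volume.restrict (Ioi 0)).prod volume) := by
    rw [integrable_prod_iff h_meas.aestronglyMeasurable]
    refine ⟨?_, ?_⟩
    · filter_upwards [ae_restrict_mem measurableSet_Ioi] with β hβ using (h_fiber β hβ).1
    · refine ((integrableOn_pow_mul_gammaPriorPDF hζ hδ k).const_mul
        (Gamma (α + k) / Gamma α)).congr ?_
      filter_upwards [ae_restrict_mem measurableSet_Ioi] with β hβ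
      simp only [Function.uncurry_apply_pair, Real.norm_of_nonneg (h_nonneg β hβ _),
        (h_fiber β hβ).2]
  calc ∫ x, (x - γ) ^ k * skdDensity α ζ δ γ x
      = ∫ x, ∫ β in Ioi 0, H β x := by
        simp only [hH, skdDensity_eq_integral, integral_const_mul]
    _ = ∫ β in Ioi 0, ∫ x, H β x := (integral_integral_swap h_int).symm
    _ = _ := setIntegral_congr_fun measurableSet_Ioi fun β hβ ↦ (h_fiber β hβ).2

theorem integral_pow_mul_skdDensity (hα : 0 < α) (hζ : 0 < ζ) (hδ : 0 < δ)
    (γ : ℝ) {k : ℕ} (hk : Even k) :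
    ∫ x, (x - γ) ^ k * skdDensity α ζ δ γ x =
      (∏ i ∈ range k, (α + i)) * (∏ i ∈ range k, (ζ + i)) / δ ^ k := by
  have hΓα := Gamma_pos_of_pos hα
  have hΓζ := Gamma_pos_of_pos hζ
  rw [integral_pow_mul_skdDensity_eq_setIntegral hα hζ hδ γ hk, integral_const_mul,
    integral_pow_mul_gammaPriorPDF hζ hδ k, Gamma_add_natCast hα, Gamma_add_natCast hζ]
  field_simp

end Mixture

/-- The fourth cumulant κ₄ = μ̃₄ - 3 μ̃₂² of the symmetric K-distribution. -/
theorem skd_fourth_cumulant (α ζ δ γ : ℝ) (hα : 0 < α) (hζ : 0 < ζ) (hδ : 0 < δ) :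
    (∫ x : ℝ, (x - γ) ^ 4 * skdDensity α ζ δ γ x)
        - 3 * (∫ x : ℝ, (x - γ) ^ 2 * skdDensity α ζ δ γ x) ^ 2
      = (α * (α + 1) * (α + 2) * (α + 3) * ζ * (ζ + 1) * (ζ + 2) * (ζ + 3)
          - 3 * (α * (α + 1) * ζ * (ζ + 1)) ^ 2) / δ ^ 4 := by
  rw [integral_pow_mul_skdDensity hα hζ hδ γ (by decide : Even 4),
    integral_pow_mul_skdDensity hα hζ hδ γ (by decide : Even 2)]
  simp only [prod_range_succ, prod_range_zero]
  push_cast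
  field_simp
  ring
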